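/- arXiv:2510.06545 — 3 statements merged into one kernel-verified Lean document; each statement's English description precedes it below -/
import Mathlib

section
/- Let a finite-horizon MDP with finite state and action types, transition kernel τ, initial distribution μ, horizon T and real-valued reward r be given, and let π be a policy. Then for every time t ≤ T, state s and action a: exp(Q^π_t(s,a)) equals the expectation of ∏_{u=t}^{T} exp(r(s_u,a_u)) over the random trajectory started with s_t = s and a_t = a and continued by a_u ∼ π_u(s_u) and s_{u+1} ∼ τ(s_u,a_u); and exp(V^π_t(s)) equals the same expectation with additionally a_t ∼ π_t(s). Equivalently, Q^π_t(s,a) = log p_π(O_{t:T}=1 | s_t=s, a_t=a) and V^π_t(s) = log p_π(O_{t:T}=1 | s_t=s), where the optimality variables O_u are, given the trajectory, independent Bernoulli with p(O_u = 1 | s_u,a_u) = exp r(s_u,a_u). -/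
/-!
Exponentiating the soft Bellman recursion turns each log-sum-exp into a plain expectation:
`exp Q_t(s,a) = exp r(s,a) · E_{s' ∼ τ(s,a), a' ∼ π_{t+1}(s')} [exp Q_{t+1}(s',a')]`.
Splitting a path into its first state-action pair and its tail shows that the path sum
`E[∏_u exp r(s_u,a_u) | s_t = s, a_t = a]` satisfies the same linear recursion, so the two agree
by induction on the number `T - t` of remaining steps; `V` is then the `π_t(s)`-average of `Q`.
-/

open scoped BigOperators ENNReal

/-- A finite-horizon MDP: finite nonempty state and action types, transition kernel,
initial distribution, horizon `T` (time steps `0,…,T`), and non-positive real reward. -/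
structure MDP where
  S : Type
  A : Type
  [fintS : Fintype S]
  [fintA : Fintype A]
  [deceqS : DecidableEq S]
  [deceqA : DecidableEq A]
  [noneS : Nonempty S]
  [noneA : Nonempty A]
  tk : S → A → PMF S
  init : PMF S
  T : ℕ
  r : S → A → ℝ
  r_nonpos : ∀ s a, r s a ≤ 0

attribute [instance] MDP.fintS MDP.fintA MDP.deceqS MDP.deceqA MDP.noneS MDP.noneA

/-- A policy: a family of action distributions, one for each time step and state. -/
abbrev MDP.Policy (M : MDP) : Type := ℕ → M.S → PMF M.A

/-- Deterministic transitions: every `τ(s,a)` is a point mass. -/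
def MDP.Det (M : MDP) : Prop := ∀ s a, ∃ s', M.tk s a = PMF.pure s'

/-- Soft `Q` for a (possibly time-indexed) reward `r'`, indexed by the number of remaining
steps `k` (so that the actual time is `M.T - k`):
`Q_T(s,a) = r'_T(s,a)` and, for `t < T`,
`Q_t(s,a) = r'_t(s,a) + log E_{s'∼τ(s,a)}[exp V_{t+1}(s')]` with
`V_t(s) = log E_{a∼π_t(s)}[exp Q_t(s,a)]`. -/
noncomputable def QrevR (M : MDP) (r' : ℕ → M.S → M.A → ℝ) (π : M.Policy) :
    ℕ → M.S → M.A → ℝ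
  | 0 => fun s a => r' M.T s a
  | (k+1) => fun s a => r' (M.T - (k+1)) s a +
      Real.log (∑ s' : M.S, (M.tk s a s').toReal *
        Real.exp (Real.log (∑ a' : M.A, ((π (M.T - k) s') a').toReal *
          Real.exp (QrevR M r' π k s' a'))))

/-- Soft `Q^{π,r'}_t` at actual time `t`. -/
noncomputable def softQR (M : MDP) (r' : ℕ → M.S → M.A → ℝ) (π : M.Policy)
    (t : ℕ) : M.S → M.A → ℝ :=
  QrevR M r' π (M.T - t)

/-- Soft `Q^π_t` for the MDP's own reward. -/
noncomputable def softQ (M : MDP) (π : M.Policy) (t : ℕ) : M.S → M.A → ℝ :=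
  softQR M (fun _ => M.r) π t

/-- Soft `V^π_t(s) = log E_{a∼π_t(s)}[exp Q^π_t(s,a)]`. -/
noncomputable def softV (M : MDP) (π : M.Policy) (t : ℕ) (s : M.S) : ℝ :=
  Real.log (∑ a : M.A, ((π t s) a).toReal * Real.exp (softQ M π t s a))

/-- A trajectory `ξ = (s_0,…,s_T, a_0,…,a_T)`. -/
abbrev MDP.Traj (M : MDP) : Type := (Fin (M.T + 1) → M.S) × (Fin (M.T + 1) → M.A)

/-- The probability of a trajectory under policy `π`:
`s_0 ∼ μ`, `a_t ∼ π_t(s_t)`, `s_{t+1} ∼ τ(s_t,a_t)`. -/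
noncomputable def trajP (M : MDP) (π : M.Policy) (ξ : M.Traj) : ℝ≥0∞ :=
  M.init (ξ.1 0) * (∏ t : Fin (M.T + 1), (π t.val (ξ.1 t)) (ξ.2 t)) *
    ∏ t : Fin M.T, (M.tk (ξ.1 t.castSucc) (ξ.2 t.castSucc)) (ξ.1 t.succ)

open Classical in
/-- Kullback–Leibler divergence between two probability mass functions on a finite type,
valued in `[0,∞]`. -/
noncomputable def KLfin {α : Type} [Fintype α] (q p : α → ℝ≥0∞) : ℝ≥0∞ :=
  if ∀ a, p a = 0 → q a = 0 then
    ENNReal.ofReal (∑ a : α, (q a).toReal * Real.log ((q a).toReal / (p a).toReal))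
  else ⊤

/-- Occupancy measure: the probability that the state at time `t` is `s` under `p_π`. -/
noncomputable def occ (M : MDP) (π : M.Policy) (t : Fin (M.T + 1)) (s : M.S) : ℝ≥0∞ :=
  ∑ ξ : M.Traj, if ξ.1 t = s then trajP M π ξ else 0

/-- The return `J(π) = E_{ξ∼p_π}[Σ_t r(s_t,a_t)]`. -/
noncomputable def Jret (M : MDP) (π : M.Policy) : ℝ :=
  ∑ ξ : M.Traj, (trajP M π ξ).toReal * ∑ t : Fin (M.T + 1), M.r (ξ.1 t) (ξ.2 t)

/-- Success probability `P(π) = E_{ξ∼p_π}[∏_t exp r(s_t,a_t)]`. -/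
noncomputable def successP (M : MDP) (π : M.Policy) : ℝ :=
  ∑ ξ : M.Traj, (trajP M π ξ).toReal * ∏ t : Fin (M.T + 1), Real.exp (M.r (ξ.1 t) (ξ.2 t))

/-- Normalisation of a nonzero, finite weight function on a finite type into a `PMF`. -/
noncomputable def normPMF {α : Type} [Fintype α] (f : α → ℝ≥0∞)
    (h0 : ∃ a, f a ≠ 0) (hfin : ∀ a, f a ≠ ∞) : PMF α :=
  PMF.normalize f
    (fun h => by obtain ⟨a, ha⟩ := h0; exact ha (ENNReal.tsum_eq_zero.mp h a))
    (by
      rw [tsum_fintype]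
      exact (ENNReal.sum_lt_top.mpr fun a _ => (hfin a).lt_top).ne)

/-- The control-as-inference operator:
`G(π)_t(a|s) ∝ π_t(a|s)·exp(Q^π_t(s,a))`. -/
noncomputable def Gop (M : MDP) (π : M.Policy) : M.Policy := fun t s =>
  normPMF (fun a => (π t s) a * ENNReal.ofReal (Real.exp (softQ M π t s a)))
    (by
      obtain ⟨a, ha⟩ := (π t s).support_nonempty
      exact ⟨a, mul_ne_zero (((π t s).mem_support_iff a).mp ha)
        (ENNReal.ofReal_pos.mpr (Real.exp_pos _)).ne'⟩)
    (fun a => ENNReal.mul_ne_top (PMF.apply_ne_top _ _) ENNReal.ofReal_ne_top)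

/-- The control-as-inference sequence: `π^G_0 = p`, `π^G_{i+1} = G(π^G_i)`. -/
noncomputable def Gseq (M : MDP) (p : M.Policy) : ℕ → M.Policy
  | 0 => p
  | (k+1) => Gop M (Gseq M p k)

/-- The Boltzmann policy `π^δ_t(a|s) ∝ exp(Q^π_t(s,a)/δ)`. -/
noncomputable def Boltz (M : MDP) (π : M.Policy) (δ : ℝ) : M.Policy := fun t s =>
  normPMF (fun a => ENNReal.ofReal (Real.exp (softQ M π t s a / δ)))
    ⟨Classical.arbitrary M.A, (ENNReal.ofReal_pos.mpr (Real.exp_pos _)).ne'⟩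
    (fun _ => ENNReal.ofReal_ne_top)

/-- Boltzmann incoherence `κ_δ(π) = KL(p_π ‖ p_{π^δ})`. -/
noncomputable def kappaDelta (M : MDP) (π : M.Policy) (δ : ℝ) : ℝ≥0∞ :=
  KLfin (trajP M π) (trajP M (Boltz M π δ))

theorem Fintype.sum_pi_prod_pi_succ {α β M : Type*} [Fintype α] [Fintype β] [AddCommMonoid M]
    {n : ℕ} (F : (Fin (n + 1) → α) × (Fin (n + 1) → β) → M) :
    ∑ ζ, F ζ = ∑ x, ∑ y, ∑ ζ : (Fin n → α) × (Fin n → β), F (Fin.cons x ζ.1, Fin.cons y ζ.2) := by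
  let e : (α × β) × ((Fin n → α) × (Fin n → β)) ≃ (Fin (n + 1) → α) × (Fin (n + 1) → β) :=
    ((Equiv.prodProdProdComm _ _ _ _).trans
      ((Fin.consEquiv fun _ => α).prodCongr (Fin.consEquiv fun _ => β)))
  rw [← e.sum_comp, Fintype.sum_prod_type, Fintype.sum_prod_type]
  rfl

theorem Fintype.sum_sum_sum_ite_and_eq {α β γ M : Type*} [Fintype α] [Fintype β] [Fintype γ]
    [DecidableEq α] [DecidableEq β] [AddCommMonoid M] (f : γ → α) (g : γ → β)
    (F : α → β → γ → M) :
    ∑ x, ∑ y, ∑ c, (if f c = x ∧ g c = y then F x y c else 0) = ∑ c, F (f c) (g c) c := by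
  conv_lhs => enter [2, x]; rw [Finset.sum_comm]
  rw [Finset.sum_comm]
  simp [ite_and, Finset.sum_ite_eq]

theorem Fintype.sum_sum_ite_and_eq {β γ M : Type*} [Fintype β] [Fintype γ]
    [DecidableEq β] [AddCommMonoid M] (p : γ → Prop) [DecidablePred p] (g : γ → β)
    (F : β → γ → M) :
    ∑ y, ∑ c, (if p c ∧ g c = y then F y c else 0) = ∑ c, if p c then F (g c) c else 0 := by
  rw [Finset.sum_comm]
  simp [ite_and, Finset.sum_ite_eq]

theorem PMF.sum_toReal_mul_pos {α : Type*} [Fintype α] (p : PMF α) {f : α → ℝ}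
    (hf : ∀ a, 0 < f a) : 0 < ∑ a, (p a).toReal * f a := by
  obtain ⟨a, ha⟩ := p.support_nonempty
  refine Finset.sum_pos' (fun b _ => mul_nonneg ENNReal.toReal_nonneg (hf b).le)
    ⟨a, Finset.mem_univ a, mul_pos ?_ (hf a)⟩
  exact ENNReal.toReal_pos ((p.mem_support_iff a).mp ha) (p.apply_ne_top a)

namespace MDP

variable (M : MDP)

abbrev Path (k : ℕ) : Type := (Fin (k + 1) → M.S) × (Fin (k + 1) → M.A)

variable {M}

def Path.cons {k : ℕ} (x : M.S) (y : M.A) (ζ : M.Path k) : M.Path (k + 1) :=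
  (Fin.cons x ζ.1, Fin.cons y ζ.2)

theorem sum_path_succ {N : Type*} [AddCommMonoid N] {k : ℕ} (F : M.Path (k + 1) → N) :
    ∑ ζ, F ζ = ∑ x, ∑ y, ∑ ζ : M.Path k, F (ζ.cons x y) :=
  Fintype.sum_pi_prod_pi_succ F

/-- `ζ` is read as starting at time `t`: its `u`-th action is drawn from `π (t + u)`. -/
noncomputable def pathProb (π : M.Policy) (t : ℕ) {k : ℕ} (ζ : M.Path k) : ℝ≥0∞ :=
  ∏ u : Fin k, M.tk (ζ.1 u.castSucc) (ζ.2 u.castSucc) (ζ.1 u.succ) *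
    π (t + u.val + 1) (ζ.1 u.succ) (ζ.2 u.succ)

noncomputable def pathExpReward {k : ℕ} (ζ : M.Path k) : ℝ :=
  ∏ u : Fin (k + 1), Real.exp (M.r (ζ.1 u) (ζ.2 u))

theorem pathProb_cons (π : M.Policy) (t : ℕ) {k : ℕ} (x : M.S) (y : M.A) (ζ : M.Path k) :
    pathProb π t (ζ.cons x y) =
      M.tk x y (ζ.1 0) * π (t + 1) (ζ.1 0) (ζ.2 0) * pathProb π (t + 1) ζ := by
  simp only [pathProb, Path.cons, Fin.prod_univ_succ, Fin.castSucc_zero, Fin.cons_zero,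
    Fin.cons_succ, ← Fin.succ_castSucc, Fin.val_succ, Fin.val_zero, add_assoc,
    add_left_comm 1]

theorem pathExpReward_cons {k : ℕ} (x : M.S) (y : M.A) (ζ : M.Path k) :
    pathExpReward (ζ.cons x y) = Real.exp (M.r x y) * pathExpReward ζ := by
  simp only [pathExpReward, Path.cons, Fin.prod_univ_succ (n := k + 1), Fin.cons_zero,
    Fin.cons_succ]

/-- `p_π(O_{t:t+k} = 1 | s_t = s, a_t = a)`. -/
noncomputable def optProbQ (π : M.Policy) (t k : ℕ) (s : M.S) (a : M.A) : ℝ :=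
  ∑ ζ : M.Path k, (if ζ.1 0 = s ∧ ζ.2 0 = a then (pathProb π t ζ).toReal else 0) *
    pathExpReward ζ

theorem optProbQ_zero (π : M.Policy) (t : ℕ) (s : M.S) (a : M.A) :
    optProbQ π t 0 s a = Real.exp (M.r s a) := by
  rw [optProbQ, Fintype.sum_pi_prod_pi_succ]
  simp [pathProb, pathExpReward, ite_and]

theorem optProbQ_succ (π : M.Policy) (t k : ℕ) (s : M.S) (a : M.A) :
    optProbQ π t (k + 1) s a = Real.exp (M.r s a) *
      ∑ s', (M.tk s a s').toReal * ∑ a', (π (t + 1) s' a').toReal * optProbQ π (t + 1) k s' a' := by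
  have head_eq : ∀ x y (ζ : M.Path k), (ζ.cons x y).1 0 = x ∧ (ζ.cons x y).2 0 = y :=
    fun _ _ _ => ⟨rfl, rfl⟩
  simp only [optProbQ, sum_path_succ, head_eq, pathProb_cons, pathExpReward_cons]
  simp only [Finset.mul_sum, ite_mul, zero_mul, mul_ite, mul_zero]
  rw [Fintype.sum_sum_sum_ite_and_eq (fun ζ : M.Path k => ζ.1 0) (fun ζ => ζ.2 0)]
  simp only [ite_and, Finset.sum_ite_irrel, Finset.sum_const_zero,
    Finset.sum_ite_eq', Finset.mem_univ, if_true]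
  refine Finset.sum_congr rfl fun ζ _ => ?_
  rw [ENNReal.toReal_mul, ENNReal.toReal_mul]
  ring

/-- `p_π(O_{t:t+k} = 1 | s_t = s)`. -/
noncomputable def optProbV (π : M.Policy) (t k : ℕ) (s : M.S) : ℝ :=
  ∑ ζ : M.Path k, (if ζ.1 0 = s then (π t (ζ.1 0) (ζ.2 0) * pathProb π t ζ).toReal else 0) *
    pathExpReward ζ

theorem optProbV_eq_sum (π : M.Policy) (t k : ℕ) (s : M.S) :
    optProbV π t k s = ∑ a, (π t s a).toReal * optProbQ π t k s a := by
  simp only [optProbQ, Finset.mul_sum, ite_mul, zero_mul, mul_ite, mul_zero]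
  rw [Fintype.sum_sum_ite_and_eq (fun ζ : M.Path k => ζ.1 0 = s) (fun ζ => ζ.2 0)]
  refine Finset.sum_congr rfl fun ζ _ => ?_
  split_ifs with hs
  · rw [hs, ENNReal.toReal_mul, mul_assoc]
  · rw [zero_mul]

theorem exp_QrevR_succ (r' : ℕ → M.S → M.A → ℝ) (π : M.Policy) (k : ℕ) (s : M.S) (a : M.A) :
    Real.exp (QrevR M r' π (k + 1) s a) = Real.exp (r' (M.T - (k + 1)) s a) *
      ∑ s', (M.tk s a s').toReal *
        ∑ a', (π (M.T - k) s' a').toReal * Real.exp (QrevR M r' π k s' a') := by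
  have inner_pos : ∀ s', 0 < ∑ a', (π (M.T - k) s' a').toReal * Real.exp (QrevR M r' π k s' a') :=
    fun s' => (π _ s').sum_toReal_mul_pos fun _ => Real.exp_pos _
  rw [QrevR, Real.exp_add]
  simp only [Real.exp_log (inner_pos _)]
  rw [Real.exp_log ((M.tk s a).sum_toReal_mul_pos inner_pos)]

theorem exp_QrevR_eq_optProbQ (π : M.Policy) {t k : ℕ} (h : M.T - t = k) (s : M.S) (a : M.A) :
    Real.exp (QrevR M (fun _ => M.r) π k s a) = optProbQ π t k s a := by
  induction k generalizing t s a with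
  | zero => rw [optProbQ_zero]; rfl
  | succ k ih =>
    rw [exp_QrevR_succ, optProbQ_succ, show M.T - k = t + 1 by omega]
    simp only [ih (t := t + 1) (by omega)]

theorem exp_softQ_eq_optProbQ (π : M.Policy) (t : ℕ) (s : M.S) (a : M.A) :
    Real.exp (softQ M π t s a) = optProbQ π t (M.T - t) s a :=
  exp_QrevR_eq_optProbQ π rfl s a

theorem exp_softV_eq_optProbV (π : M.Policy) (t : ℕ) (s : M.S) :
    Real.exp (softV M π t s) = optProbV π t (M.T - t) s := by
  rw [softV, Real.exp_log ((π t s).sum_toReal_mul_pos fun _ => Real.exp_pos _), optProbV_eq_sum]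
  simp only [exp_softQ_eq_optProbQ]

end MDP

theorem stmt0_general (M : MDP) (π : M.Policy) (t : ℕ) (s : M.S) (a : M.A) :
    (Real.exp (softQ M π t s a) =
      ∑ ζ : (Fin (M.T - t + 1) → M.S) × (Fin (M.T - t + 1) → M.A),
        (if ζ.1 0 = s ∧ ζ.2 0 = a then
          (∏ u : Fin (M.T - t),
              (M.tk (ζ.1 u.castSucc) (ζ.2 u.castSucc)) (ζ.1 u.succ) *
                (π (t + u.val + 1) (ζ.1 u.succ)) (ζ.2 u.succ)).toReal
         else 0) * ∏ u : Fin (M.T - t + 1), Real.exp (M.r (ζ.1 u) (ζ.2 u)))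
    ∧ (Real.exp (softV M π t s) =
      ∑ ζ : (Fin (M.T - t + 1) → M.S) × (Fin (M.T - t + 1) → M.A),
        (if ζ.1 0 = s then
          ((π t (ζ.1 0)) (ζ.2 0) *
            ∏ u : Fin (M.T - t),
              (M.tk (ζ.1 u.castSucc) (ζ.2 u.castSucc)) (ζ.1 u.succ) *
                (π (t + u.val + 1) (ζ.1 u.succ)) (ζ.2 u.succ)).toReal
         else 0) * ∏ u : Fin (M.T - t + 1), Real.exp (M.r (ζ.1 u) (ζ.2 u))) :=
  ⟨MDP.exp_softQ_eq_optProbQ π t s a, MDP.exp_softV_eq_optProbV π t s⟩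

/-- for every `t ≤ T`, state `s` and action `a`, `exp(Q^π_t(s,a))` equals the
expectation of `∏_{u=t}^{T} exp r(s_u,a_u)` over the random suffix trajectory started with
`s_t = s`, `a_t = a` and continued by `a_u ∼ π_u(s_u)`, `s_{u+1} ∼ τ(s_u,a_u)`; and
`exp(V^π_t(s))` equals the same expectation with additionally `a_t ∼ π_t(s)`.
Equivalently `Q^π_t(s,a) = log p_π(O_{t:T}=1|s_t=s,a_t=a)` and
`V^π_t(s) = log p_π(O_{t:T}=1|s_t=s)` for the Bernoulli optimality variables
`p(O_u = 1|s_u,a_u) = exp r(s_u,a_u)`. -/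
theorem stmt0 (M : MDP) (π : M.Policy) (t : ℕ) (ht : t ≤ M.T) (s : M.S) (a : M.A) :
    (Real.exp (softQ M π t s a) =
      ∑ ζ : (Fin (M.T - t + 1) → M.S) × (Fin (M.T - t + 1) → M.A),
        (if ζ.1 0 = s ∧ ζ.2 0 = a then
          (∏ u : Fin (M.T - t),
              (M.tk (ζ.1 u.castSucc) (ζ.2 u.castSucc)) (ζ.1 u.succ) *
                (π (t + u.val + 1) (ζ.1 u.succ)) (ζ.2 u.succ)).toReal
         else 0) * ∏ u : Fin (M.T - t + 1), Real.exp (M.r (ζ.1 u) (ζ.2 u)))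
    ∧ (Real.exp (softV M π t s) =
      ∑ ζ : (Fin (M.T - t + 1) → M.S) × (Fin (M.T - t + 1) → M.A),
        (if ζ.1 0 = s then
          ((π t (ζ.1 0)) (ζ.2 0) *
            ∏ u : Fin (M.T - t),
              (M.tk (ζ.1 u.castSucc) (ζ.2 u.castSucc)) (ζ.1 u.succ) *
                (π (t + u.val + 1) (ζ.1 u.succ)) (ζ.2 u.succ)).toReal
         else 0) * ∏ u : Fin (M.T - t + 1), Real.exp (M.r (ζ.1 u) (ζ.2 u))) :=
  stmt0_general M π t s a
end

section
/- Let a finite-horizon MDP with real-valued reward be given, let f : (A → ℝ) → PMF A be any function, and let π be any policy. Define the iterated sequence π^B_0 = π and π^B_{k+1,t}(·|s) = f(Q^{π^B_k}_t(s,·)) for all t, s. Then the sequence stabilizes after at most T+1 steps: π^B_k = π^B_{T+1} for all k ≥ T+1, and π^B_{T+1} is a fixed point, i.e., π^B_{T+1,t}(·|s) = f(Q^{π^B_{T+1}}_t(s,·)) for all t, s; in particular, κ_f(π^B_{T+1}) = 0, so π^B_{T+1} is f-coherent. -/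
open scoped BigOperators ENNReal

/-- The iterated `f`-coherence sequence: `π^B_0 = π`,
`π^B_{k+1,t}(·|s) = f(Q^{π^B_k}_t(s,·))`. -/
noncomputable def iterB (M : MDP) (f : (M.A → ℝ) → PMF M.A) (π : M.Policy) : ℕ → M.Policy
  | 0 => π
  | (k+1) => fun t s => f (softQ M (iterB M f π k) t s)

/-!
`Q^π_t` only looks at `π` at the later times `t+1, …, T`. Hence, by backward induction on
`t`, the iterates `π^B_{k+1}` and `π^B_k` already agree at every time `t ≥ T - k + 1`, so
`π^B_{T+2} = π^B_{T+1}`: the sequence is constant from `T+1` on, and its value there is a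
fixed point, whose trajectory distribution coincides with that of its `f`-soft `Q` policy.
-/

lemma QrevR_congr (M : MDP) (r' : ℕ → M.S → M.A → ℝ) {π π' : M.Policy} {k : ℕ}
    (h : ∀ j < k, π (M.T - j) = π' (M.T - j)) : QrevR M r' π k = QrevR M r' π' k := by
  induction k with
  | zero => rfl
  | succ k ih =>
    funext s a
    simp only [QrevR]
    rw [ih fun j hj => h j (hj.trans k.lt_succ_self), h k k.lt_succ_self]

lemma softQR_congr (M : MDP) (r' : ℕ → M.S → M.A → ℝ) {π π' : M.Policy} {t : ℕ}
    (h : ∀ u, t < u → u ≤ M.T → π u = π' u) : softQR M r' π t = softQR M r' π' t :=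
  QrevR_congr M r' fun j hj => h (M.T - j) (by omega) (by omega)

lemma iterB_succ_succ_apply_of_le (M : MDP) (f : (M.A → ℝ) → PMF M.A) (π : M.Policy)
    {k t : ℕ} (h : M.T ≤ t + k) : iterB M f π (k + 2) t = iterB M f π (k + 1) t := by
  induction k generalizing t with
  | zero =>
    funext s
    exact congrArg (fun Q => f (Q s)) (softQR_congr M _ (t := t) fun _ _ _ => by omega)
  | succ k ih =>
    funext s
    exact congrArg (fun Q => f (Q s))
      (softQR_congr M _ (t := t) fun u _ _ => ih (t := u) (by omega))

lemma iterB_eq_of_succ_eq (M : MDP) (f : (M.A → ℝ) → PMF M.A) (π : M.Policy) {n m : ℕ}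
    (h : iterB M f π (n + 1) = iterB M f π n) (hm : n ≤ m) :
    iterB M f π m = iterB M f π n := by
  induction m, hm using Nat.le_induction with
  | base => rfl
  | succ m _ ih =>
    change (fun t s => f (softQ M (iterB M f π m) t s)) = _
    rw [ih]
    exact h

lemma KLfin_self {α : Type} [Fintype α] (q : α → ℝ≥0∞) : KLfin q q = 0 := by
  simp [KLfin]

/-- the iterated sequence stabilizes after at most `T+1` steps, the limit is a
fixed point (`π^B_{T+1,t}(·|s) = f(Q^{π^B_{T+1}}_t(s,·))` for all `t,s`), hence
`κ_f(π^B_{T+1}) = 0`, i.e. `π^B_{T+1}` is `f`-coherent. -/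
theorem stmt5 (M : MDP) (f : (M.A → ℝ) → PMF M.A) (π : M.Policy) :
    (∀ k, M.T + 1 ≤ k → iterB M f π k = iterB M f π (M.T + 1)) ∧
    (∀ t ≤ M.T, ∀ s, iterB M f π (M.T + 1) t s = f (softQ M (iterB M f π (M.T + 1)) t s)) ∧
    KLfin (trajP M (iterB M f π (M.T + 1)))
      (trajP M (fun t s => f (softQ M (iterB M f π (M.T + 1)) t s))) = 0 := by
  have hfix : iterB M f π (M.T + 2) = iterB M f π (M.T + 1) :=
    funext fun t => iterB_succ_succ_apply_of_le M f π (by omega)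
  refine ⟨fun k hk => iterB_eq_of_succ_eq M f π hfix hk,
    fun t _ s => (congrFun (congrFun hfix t) s).symm, ?_⟩
  change KLfin _ (trajP M (iterB M f π (M.T + 2))) = 0
  rw [hfix]
  exact KLfin_self _
end

section
/- Let A be a finite nonempty type, p : PMF A a distribution with full support, and r : A → ℝ. Define q* : PMF A by q*(a) = p(a)·exp(r(a)) / Σ_{a'} p(a')·exp(r(a')). Then q* is the unique maximizer of the KL-regularized objective F(q) = E_{a∼q}[r(a)] − KL(q ‖ p) over all q : PMF A: for every q, F(q) ≤ F(q*), with equality if and only if q = q*. -/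
open scoped BigOperators ENNReal

/-- The KL-regularized objective `F(q) = E_{a∼q}[r(a)] − KL(q ‖ p)`, valued in `EReal`
(equal to `−∞` when `KL(q ‖ p) = ∞`). -/
noncomputable def KLreg {A : Type} [Fintype A] (r : A → ℝ) (p q : PMF A) : EReal :=
  ((∑ a : A, (q a).toReal * r a : ℝ) : EReal) -
    ((KLfin (fun a => q a) (fun a => p a) : ℝ≥0∞) : EReal)

/-- The tilted distribution `q*(a) = p(a)·exp(r(a)) / Σ_{a'} p(a')·exp(r(a'))`. -/
noncomputable def tiltedPMF {A : Type} [Fintype A] [Nonempty A] (p : PMF A)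
    (hp : ∀ a, p a ≠ 0) (r : A → ℝ) : PMF A :=
  normPMF (fun a => p a * ENNReal.ofReal (Real.exp (r a)))
    ⟨Classical.arbitrary A, mul_ne_zero (hp _) (ENNReal.ofReal_pos.mpr (Real.exp_pos _)).ne'⟩
    (fun a => ENNReal.mul_ne_top (PMF.apply_ne_top _ _) ENNReal.ofReal_ne_top)

/-!
Gibbs' variational principle: with `Z = ∑ₐ p(a) e^{r(a)}` and `q* = p e^r / Z`,
every `q` satisfies `F(q) = log Z − KL(q ‖ q*)`. Gibbs' inequality `KL(q ‖ q*) ≥ 0`, with equality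
only at `q = q*`, then gives both claims; it follows termwise from `klFun ≥ 0`, because
`x log(x/y) = y klFun(x/y) + (x − y)` and the linear terms sum to zero.
-/

open Real InformationTheory

lemma PMF.sum_toReal_eq_one {A : Type} [Fintype A] (u : PMF A) : ∑ a, (u a).toReal = 1 := by
  have h := u.tsum_coe
  rw [tsum_fintype] at h
  rw [← ENNReal.toReal_sum fun a _ => u.apply_ne_top a, h, ENNReal.toReal_one]

lemma mul_log_div_eq_mul_klFun_add {x y : ℝ} (hy : 0 < y) :
    x * log (x / y) = y * klFun (x / y) + (x - y) := by
  rw [klFun_apply]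
  field_simp
  ring

section klReal

variable {A : Type} [Fintype A] {f g : A → ℝ}

noncomputable def klReal (f g : A → ℝ) : ℝ := ∑ a, f a * log (f a / g a)

lemma klReal_self (g : A → ℝ) : klReal g g = 0 :=
  Finset.sum_eq_zero fun a _ => by rcases eq_or_ne (g a) 0 with h | h <;> simp [h]

lemma klReal_eq_sum_mul_klFun (hg : ∀ a, 0 < g a) (hfg : ∑ a, f a = ∑ a, g a) :
    klReal f g = ∑ a, g a * klFun (f a / g a) := by
  have hsub : ∑ a, (f a - g a) = 0 := by rw [Finset.sum_sub_distrib, hfg, sub_self]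
  simp only [klReal, mul_log_div_eq_mul_klFun_add (hg _), Finset.sum_add_distrib, hsub,
    add_zero]

lemma klReal_nonneg (hf : ∀ a, 0 ≤ f a) (hg : ∀ a, 0 < g a) (hfg : ∑ a, f a = ∑ a, g a) :
    0 ≤ klReal f g := by
  rw [klReal_eq_sum_mul_klFun hg hfg]
  exact Finset.sum_nonneg fun a _ =>
    mul_nonneg (hg a).le (klFun_nonneg (div_nonneg (hf a) (hg a).le))

lemma klReal_eq_zero_iff (hf : ∀ a, 0 ≤ f a) (hg : ∀ a, 0 < g a)
    (hfg : ∑ a, f a = ∑ a, g a) :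
    klReal f g = 0 ↔ f = g := by
  have hterm : ∀ a, 0 ≤ g a * klFun (f a / g a) := fun a =>
    mul_nonneg (hg a).le (klFun_nonneg (div_nonneg (hf a) (hg a).le))
  rw [klReal_eq_sum_mul_klFun hg hfg, Finset.sum_eq_zero_iff_of_nonneg fun a _ => hterm a,
    funext_iff]
  refine forall_congr' fun a => ?_
  rw [mul_eq_zero, or_iff_right (hg a).ne', klFun_eq_zero_iff (div_nonneg (hf a) (hg a).le),
    div_eq_one_iff_eq (hg a).ne']
  simp

lemma sum_mul_sub_klReal_eq_log_sub_klReal [Nonempty A] (r : A → ℝ) (hg : ∀ a, 0 < g a)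
    (hf : ∑ a, f a = 1) :
    ∑ a, f a * r a - klReal f g =
      log (∑ b, g b * exp (r b)) -
        klReal f (fun a => g a * exp (r a) / ∑ b, g b * exp (r b)) := by
  set Z := ∑ b, g b * exp (r b)
  have hZ : 0 < Z := Finset.sum_pos (fun a _ => mul_pos (hg a) (exp_pos _)) Finset.univ_nonempty
  have hterm : ∀ a, f a * log (f a / (g a * exp (r a) / Z)) =
      f a * log (f a / g a) - f a * r a + f a * log Z := by
    intro a
    rcases eq_or_ne (f a) 0 with h | h
    · simp [h]
    have hga : 0 < g a * exp (r a) := mul_pos (hg a) (exp_pos _)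
    rw [log_div h (div_pos hga hZ).ne', log_div hga.ne' hZ.ne',
      log_mul (hg a).ne' (exp_pos _).ne', log_exp, log_div h (hg a).ne']
    ring
  simp only [klReal, hterm, Finset.sum_add_distrib, Finset.sum_sub_distrib, ← Finset.sum_mul,
    hf]
  ring

end klReal

lemma KLfin_eq_ofReal_klReal {A : Type} [Fintype A] {q p : A → ℝ≥0∞}
    (hp : ∀ a, p a ≠ 0) :
    KLfin q p = ENNReal.ofReal (klReal (fun a => (q a).toReal) (fun a => (p a).toReal)) :=
  if_pos fun a ha => absurd ha (hp a)

lemma PMF.toReal_pos {A : Type} {p : PMF A} (hp : ∀ a, p a ≠ 0) (a : A) : 0 < (p a).toReal :=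
  ENNReal.toReal_pos (hp a) (p.apply_ne_top a)

lemma PMF.toReal_comp_injective {A : Type} :
    Function.Injective fun (u : PMF A) (a : A) => (u a).toReal := fun u v h =>
  PMF.ext fun a => (ENNReal.toReal_eq_toReal_iff' (u.apply_ne_top a) (v.apply_ne_top a)).mp
    (congrFun h a)

section PMF

variable {A : Type} [Fintype A] {p : PMF A}

lemma KLreg_eq_sub_klReal (hp : ∀ a, p a ≠ 0) (r : A → ℝ) (q : PMF A) :
    KLreg r p q = ((∑ a, (q a).toReal * r a -
      klReal (fun a => (q a).toReal) (fun a => (p a).toReal) : ℝ) : EReal) := by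
  have hkl := klReal_nonneg (fun a => ENNReal.toReal_nonneg) (PMF.toReal_pos hp)
    (q.sum_toReal_eq_one.trans p.sum_toReal_eq_one.symm)
  rw [KLreg, KLfin_eq_ofReal_klReal hp, EReal.coe_ennreal_ofReal, max_eq_left hkl,
    EReal.coe_sub]

lemma tiltedPMF_toReal [Nonempty A] (hp : ∀ a, p a ≠ 0) (r : A → ℝ) (a : A) :
    (tiltedPMF p hp r a).toReal = (p a).toReal * exp (r a) / ∑ b, (p b).toReal * exp (r b) := by
  have hfin : ∀ b, p b * ENNReal.ofReal (exp (r b)) ≠ ⊤ := fun b =>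
    ENNReal.mul_ne_top (p.apply_ne_top b) ENNReal.ofReal_ne_top
  simp only [tiltedPMF, normPMF, PMF.normalize_apply, tsum_fintype, ENNReal.toReal_mul,
    ENNReal.toReal_inv, ENNReal.toReal_sum fun b _ => hfin b,
    ENNReal.toReal_ofReal (exp_pos _).le, div_eq_mul_inv]

lemma tiltedPMF_ne_zero [Nonempty A] (hp : ∀ a, p a ≠ 0) (r : A → ℝ) (a : A) :
    tiltedPMF p hp r a ≠ 0 := by
  rw [← PMF.mem_support_iff, tiltedPMF, normPMF, PMF.support_normalize, Function.mem_support]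
  exact mul_ne_zero (hp a) (ENNReal.ofReal_pos.mpr (exp_pos _)).ne'

lemma KLreg_eq_log_sub_klReal_tiltedPMF [Nonempty A] (hp : ∀ a, p a ≠ 0) (r : A → ℝ)
    (q : PMF A) :
    KLreg r p q = ((log (∑ b, (p b).toReal * exp (r b)) -
      klReal (fun a => (q a).toReal) (fun a => (tiltedPMF p hp r a).toReal) : ℝ) : EReal) := by
  rw [KLreg_eq_sub_klReal hp, sum_mul_sub_klReal_eq_log_sub_klReal r (PMF.toReal_pos hp)
    q.sum_toReal_eq_one]
  simp only [tiltedPMF_toReal]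

end PMF

/-- for a full-support `p` and any `r`, the tilted distribution `q*` is the
unique maximizer of `F(q) = E_{a∼q}[r(a)] − KL(q ‖ p)` over all `q : PMF A`. -/
theorem stmt9 {A : Type} [Fintype A] [Nonempty A] (p : PMF A) (hp : ∀ a, p a ≠ 0)
    (r : A → ℝ) (q : PMF A) :
    KLreg r p q ≤ KLreg r p (tiltedPMF p hp r) ∧
    (KLreg r p q = KLreg r p (tiltedPMF p hp r) ↔ q = tiltedPMF p hp r) := by
  have hq_nonneg : ∀ a, 0 ≤ (q a).toReal := fun a => ENNReal.toReal_nonneg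
  have hqs_pos := PMF.toReal_pos (tiltedPMF_ne_zero hp r)
  have hsum : ∑ a, (q a).toReal = ∑ a, (tiltedPMF p hp r a).toReal :=
    q.sum_toReal_eq_one.trans (tiltedPMF p hp r).sum_toReal_eq_one.symm
  have hF := KLreg_eq_log_sub_klReal_tiltedPMF hp r
  rw [hF q, hF, klReal_self, sub_zero, EReal.coe_le_coe_iff, EReal.coe_eq_coe_iff, sub_eq_self,
    klReal_eq_zero_iff hq_nonneg hqs_pos hsum, PMF.toReal_comp_injective.eq_iff]
  exact ⟨sub_le_self _ (klReal_nonneg hq_nonneg hqs_pos hsum), Iff.rfl⟩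
end
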